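/- For any nonempty finite *-connected set A ⊂ Z^2 and any z ∈ A, if z is not a *-cut vertex of A then z is a marginal vertex of A. -/

import Mathlib

open Classical Filter

noncomputable section

/-- Vertices of the lattice `ℤ^d`. -/
abbrev Vtx (d : ℕ) := Fin d → ℤ

/-- The `2d` unit steps of the lattice. -/
def unitSteps (d : ℕ) : Finset (Vtx d) :=
  Finset.univ.biUnion fun i : Fin d => {Pi.single i 1, Pi.single i (-1)}

/-- Nearest-neighbour adjacency: `ℓ¹`-distance equal to `1`. -/
def Adj {d : ℕ} (x y : Vtx d) : Prop := (∑ i, |x i - y i|) = 1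

/-- `*`-adjacency: `ℓ∞`-distance equal to `1`. -/
def StarAdj {d : ℕ} (x y : Vtx d) : Prop := x ≠ y ∧ ∀ i, |x i - y i| ≤ 1

/-- `x` and `y` are joined by an `R`-path all of whose vertices lie in `S`. -/
def ConnIn {d : ℕ} (R : Vtx d → Vtx d → Prop) (S : Set (Vtx d)) (x y : Vtx d) : Prop :=
  x ∈ S ∧ Relation.ReflTransGen (fun a b => R a b ∧ b ∈ S) x y

/-- `S` is connected with respect to the relation `R`. -/
def IsConnWith {d : ℕ} (R : Vtx d → Vtx d → Prop) (S : Set (Vtx d)) : Prop :=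
  ∀ x ∈ S, ∀ y ∈ S, ConnIn R S x y

/-- nearest-neighbour connectedness of a set -/
def IsConn {d : ℕ} (S : Set (Vtx d)) : Prop := IsConnWith Adj S

/-- `*`-connectedness of a set -/
def IsStarConn {d : ℕ} (S : Set (Vtx d)) : Prop := IsConnWith StarAdj S

/-- The nearest-neighbour connected component of `v` inside `S`. -/
def compIn {d : ℕ} (S : Set (Vtx d)) (v : Vtx d) : Set (Vtx d) := {w | ConnIn Adj S v w}

/-- `A^c_∞`: the (for finite `A`, unique) infinite nearest-neighbour connected component
of `Aᶜ`, formalised as the union of all infinite components of `Aᶜ`. -/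
def infComp {d : ℕ} (A : Set (Vtx d)) : Set (Vtx d) :=
  {v | v ∈ Aᶜ ∧ (compIn Aᶜ v).Infinite}

/-- `N^A_∞(z)`: the neighbours of `z` lying in `A^c_∞`. -/
def Ninf {d : ℕ} (A : Set (Vtx d)) (z : Vtx d) : Set (Vtx d) :=
  {v | v ∈ infComp A ∧ Adj v z}

/-- `N^A_{∞,*}(z)`: the `*`-neighbours of `z` lying in `A^c_∞`. -/
def NinfStar {d : ℕ} (A : Set (Vtx d)) (z : Vtx d) : Set (Vtx d) :=
  {v | v ∈ infComp A ∧ StarAdj v z}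

/-- `z` is a marginal vertex of `A`: any two vertices of `N^A_∞(z)` are joined by a
nearest-neighbour path all of whose vertices lie in `N^A_{∞,*}(z)`. -/
def IsMarginal {d : ℕ} (A : Set (Vtx d)) (z : Vtx d) : Prop :=
  z ∈ A ∧ ∀ v ∈ Ninf A z, ∀ w ∈ Ninf A z, ConnIn Adj (NinfStar A z) v w

/-- `z` is a `*`-cut vertex of `A`. -/
def IsStarCut {d : ℕ} (A : Set (Vtx d)) (z : Vtx d) : Prop :=
  z ∈ A ∧ ¬ IsStarConn (A \ {z})

/-- `D` is a `*`-cluster (maximal `*`-connected subset) of `A`. -/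
def IsStarCluster {d : ℕ} (A D : Set (Vtx d)) : Prop :=
  D ⊆ A ∧ D.Nonempty ∧ IsStarConn D ∧
    ∀ D', D ⊆ D' → D' ⊆ A → IsStarConn D' → D' = D

/-- exterior outer vertex boundary `∂ᵒ_∞ B` -/
def extOuterBd {d : ℕ} (B : Set (Vtx d)) : Set (Vtx d) :=
  {v | v ∈ infComp B ∧ ∃ y ∈ B, Adj v y}

/-- exterior inner vertex boundary `∂ⁱ_∞ B` -/
def extInnerBd {d : ℕ} (B : Set (Vtx d)) : Set (Vtx d) :=
  {y | y ∈ B ∧ ∃ v ∈ infComp B, Adj y v}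

/-- `B^c_0`: the connected component of `0` in `Bᶜ ∪ {0}`. -/
def zeroComp {d : ℕ} (B : Set (Vtx d)) : Set (Vtx d) := compIn (Bᶜ ∪ {0}) 0

/-- `0`-exposed inner vertex boundary `∂ⁱ_0 B` -/
def zeroInnerBd {d : ℕ} (B : Set (Vtx d)) : Set (Vtx d) :=
  {y | y ∈ B ∧ ∃ v ∈ Bᶜ ∩ zeroComp B, Adj y v}

/-- outer vertex boundary `∂ᵒ B` -/
def outerBd {d : ℕ} (B : Set (Vtx d)) : Set (Vtx d) :=
  {v | v ∉ B ∧ ∃ y ∈ B, Adj v y}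

/-- `ℓ¹`-norm. -/
def norm1 {d : ℕ} (x : Vtx d) : ℤ := ∑ i, |x i|

/-- `ℓ¹`-ball of (real) radius `r` around the origin. -/
def ball1 (d : ℕ) (r : ℝ) : Set (Vtx d) := {y | (norm1 y : ℝ) ≤ r}

/-- inner vertex boundary `∂ⁱ B`: vertices of `B` having a nearest neighbour outside `B` -/
def innerBd {d : ℕ} (B : Set (Vtx d)) : Set (Vtx d) :=
  {y | y ∈ B ∧ ∃ v, Adj y v ∧ v ∉ B}

/-- `P_x(τ_A ≤ n, S_{τ_A} ∈ D)` for simple random walk on `ℤ^d`. -/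
def hitFin {d : ℕ} (A D : Set (Vtx d)) : ℕ → Vtx d → ℝ
  | 0, x => if x ∈ A then (if x ∈ D then 1 else 0) else 0
  | n + 1, x =>
      if x ∈ A then (if x ∈ D then 1 else 0)
      else (∑ s ∈ unitSteps d, hitFin A D n (x + s)) / (2 * d)

/-- `P_x(τ_A < ∞, S_{τ_A} ∈ D)`: the walk started at `x` hits `A`, with first hitting
point lying in `D`. -/
def hitProb {d : ℕ} (A D : Set (Vtx d)) (x : Vtx d) : ℝ := ⨆ n, hitFin A D n x

/-- `P_x(τ⁺_A < ∞, S_{τ⁺_A} ∈ D)` -/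
def hitPlusProb {d : ℕ} (A D : Set (Vtx d)) (x : Vtx d) : ℝ :=
  (∑ s ∈ unitSteps d, hitProb A D (x + s)) / (2 * d)

/-- escape probability `Es_A(x) = P_x(τ⁺_A = ∞)` -/
def escProb {d : ℕ} (A : Set (Vtx d)) (x : Vtx d) : ℝ := 1 - hitPlusProb A A x

/-- `P_x(S_n = y and S_i ∉ A for all i ≤ n)` -/
def avoidFin {d : ℕ} (A : Set (Vtx d)) : ℕ → Vtx d → Vtx d → ℝ
  | 0, x, y => if x ∉ A ∧ x = y then 1 else 0
  | n + 1, x, y =>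
      if x ∈ A then 0
      else (∑ s ∈ unitSteps d, avoidFin A n (x + s) y) / (2 * d)

/-- Green's function `G_A(x,y) = E_x[Σ_{i=0}^{τ_A} 1_{S_i = y}]` (for `x, y ∉ A`)
of the walk killed upon hitting `A`. -/
def greenFn {d : ℕ} (A : Set (Vtx d)) (x y : Vtx d) : ℝ := ∑' n, avoidFin A n x y

/-- harmonic measure from infinity:
`H_A(y) = lim_{|x| → ∞} P_x(S_{τ_A} = y ∣ τ_A < ∞)`. -/
def harm {d : ℕ} (A : Set (Vtx d)) (y : Vtx d) : ℝ :=
  limUnder cofinite fun x => hitProb A {y} x / hitProb A A x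

end

namespace NSC

open Relation

abbrev V2 := Vtx 2

def E1 : V2 := ![1, 0]
def E2 : V2 := ![0, 1]

@[simp] lemma E1_0 : E1 0 = 1 := rfl
@[simp] lemma E1_1 : E1 1 = 0 := rfl
@[simp] lemma E2_0 : E2 0 = 0 := rfl
@[simp] lemma E2_1 : E2 1 = 1 := rfl

lemma veq_iff (x y : V2) : x = y ↔ x 0 = y 0 ∧ x 1 = y 1 := by
  constructor
  · rintro rfl; exact ⟨rfl, rfl⟩
  · rintro ⟨h0, h1⟩; funext i; fin_cases i <;> assumption

lemma adj_iff (p q : V2) : Adj p q ↔ (p 0 - q 0).natAbs + (p 1 - q 1).natAbs = 1 := by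
  unfold Adj
  rw [Fin.sum_univ_two, Int.abs_eq_natAbs, Int.abs_eq_natAbs]
  constructor <;> intro h <;> omega

lemma adj_symm {p q : V2} (h : Adj p q) : Adj q p := by
  rw [adj_iff] at h ⊢; omega

lemma starAdj_iff (p q : V2) : StarAdj p q ↔
    ¬(p 0 = q 0 ∧ p 1 = q 1) ∧ (p 0 - q 0).natAbs ≤ 1 ∧ (p 1 - q 1).natAbs ≤ 1 := by
  unfold StarAdj
  rw [Fin.forall_fin_two, Int.abs_eq_natAbs, Int.abs_eq_natAbs, ← veq_iff]
  constructor
  · rintro ⟨h1, h2, h3⟩; exact ⟨h1, by omega, by omega⟩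
  · rintro ⟨h1, h2, h3⟩; exact ⟨h1, by omega, by omega⟩

lemma starAdj_symm {p q : V2} (h : StarAdj p q) : StarAdj q p := by
  rw [starAdj_iff] at h ⊢; omega

lemma adj_starAdj {p q : V2} (h : Adj p q) : StarAdj p q := by
  rw [adj_iff] at h; rw [starAdj_iff]; omega

/-! ### ConnIn basics -/

lemma conn_refl {R : V2 → V2 → Prop} {S : Set V2} {x : V2} (hx : x ∈ S) :
    ConnIn R S x x := ⟨hx, ReflTransGen.refl⟩

lemma conn_mem_left {R : V2 → V2 → Prop} {S : Set V2} {x y : V2}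
    (h : ConnIn R S x y) : x ∈ S := h.1

lemma conn_mem_right {R : V2 → V2 → Prop} {S : Set V2} {x y : V2}
    (h : ConnIn R S x y) : y ∈ S := by
  obtain ⟨hx, hp⟩ := h
  induction hp with
  | refl => exact hx
  | tail _ hbc _ => exact hbc.2

lemma conn_trans {R : V2 → V2 → Prop} {S : Set V2} {x y w : V2}
    (h1 : ConnIn R S x y) (h2 : ConnIn R S y w) : ConnIn R S x w :=
  ⟨h1.1, h1.2.trans h2.2⟩

lemma conn_tail {R : V2 → V2 → Prop} {S : Set V2} {x y w : V2}
    (h1 : ConnIn R S x y) (hR : R y w) (hw : w ∈ S) : ConnIn R S x w :=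
  ⟨h1.1, h1.2.tail ⟨hR, hw⟩⟩

lemma conn_symm {R : V2 → V2 → Prop} {S : Set V2} (hR : ∀ a b, R a b → R b a)
    {x y : V2} (h : ConnIn R S x y) : ConnIn R S y x := by
  refine ⟨conn_mem_right h, ?_⟩
  obtain ⟨hx, hp⟩ := h
  induction hp with
  | refl => exact ReflTransGen.refl
  | tail hab hbc ih =>
      exact ReflTransGen.head ⟨hR _ _ hbc.1, (conn_mem_right ⟨hx, hab⟩ : _ ∈ S)⟩ ih

lemma conn_mono {R : V2 → V2 → Prop} {S T : Set V2} (hST : S ⊆ T) {x y : V2}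
    (h : ConnIn R S x y) : ConnIn R T x y :=
  ⟨hST h.1, ReflTransGen.mono (fun _ _ hab => ⟨hab.1, hST hab.2⟩) _ _ h.2⟩

/-! ### infComp basics -/

lemma infComp_subset {A : Set V2} : infComp A ⊆ Aᶜ := fun _ h => h.1

lemma infComp_extend {A : Set V2} {x y : V2} (hx : x ∈ infComp A) (hy : y ∈ Aᶜ)
    (hxy : Adj x y) : y ∈ infComp A := by
  refine ⟨hy, Set.Infinite.mono ?_ hx.2⟩
  intro w hw
  exact conn_trans ⟨hy, ReflTransGen.single ⟨adj_symm hxy, hx.1⟩⟩ hw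

lemma conn_in_infComp {A : Set V2} {x y : V2} (hx : x ∈ infComp A)
    (h : ConnIn Adj Aᶜ x y) : ConnIn Adj (infComp A) x y := by
  obtain ⟨hxA, hp⟩ := h
  induction hp with
  | refl => exact conn_refl hx
  | tail hab hbc ih =>
      exact conn_tail ih hbc.1 (infComp_extend (conn_mem_right ih) hbc.2 hbc.1)

end NSC
namespace NSC

open Relation

lemma veta (p : V2) : p = ![p 0, p 1] := by
  funext i; fin_cases i <;> simp

lemma adj_coords {p q : V2} (h0 : (p 0 - q 0).natAbs + (p 1 - q 1).natAbs = 1) :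
    Adj p q := (adj_iff p q).2 h0

/-- walk horizontally from `p` to `![b, p 1]` inside `S` -/
lemma walk_horiz : ∀ (n : ℕ) (S : Set V2) (p : V2) (b : ℤ), (b - p 0).natAbs = n →
    (∀ t : ℤ, (p 0 ≤ t ∧ t ≤ b) ∨ (b ≤ t ∧ t ≤ p 0) → (![t, p 1] : V2) ∈ S) →
    ConnIn Adj S p ![b, p 1] := by
  intro n
  induction n with
  | zero =>
      intro S p b hn hmem
      have hb : b = p 0 := by omega
      subst hb
      have := hmem (p 0) (by omega)
      rw [← veta p] at this ⊢
      exact conn_refl this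
  | succ n ih =>
      intro S p b hn hmem
      rcases lt_trichotomy (p 0) b with hlt | heq | hgt
      · set p' : V2 := ![p 0 + 1, p 1] with hp'
        have hp'0 : p' 0 = p 0 + 1 := rfl
        have hp'1 : p' 1 = p 1 := rfl
        have h1 : ConnIn Adj S p' ![b, p' 1] := by
          refine ih S p' b (by omega) ?_
          intro t ht
          rw [hp'1]
          exact hmem t (by omega)
        refine conn_trans ⟨?_, ReflTransGen.single ⟨?_, ?_⟩⟩ (by rwa [hp'1] at h1)
        · have := hmem (p 0) (by omega); rwa [← veta p] at this
        · exact adj_coords (by rw [hp'0, hp'1]; omega)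
        · exact hmem (p 0 + 1) (by omega)
      · subst heq
        have := hmem (p 0) (by omega)
        rw [← veta p] at this ⊢
        exact conn_refl this
      · set p' : V2 := ![p 0 - 1, p 1] with hp'
        have hp'0 : p' 0 = p 0 - 1 := rfl
        have hp'1 : p' 1 = p 1 := rfl
        have h1 : ConnIn Adj S p' ![b, p' 1] := by
          refine ih S p' b (by omega) ?_
          intro t ht
          rw [hp'1]
          exact hmem t (by omega)
        refine conn_trans ⟨?_, ReflTransGen.single ⟨?_, ?_⟩⟩ (by rwa [hp'1] at h1)
        · have := hmem (p 0) (by omega); rwa [← veta p] at this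
        · exact adj_coords (by rw [hp'0, hp'1]; omega)
        · exact hmem (p 0 - 1) (by omega)

lemma walk_vert : ∀ (n : ℕ) (S : Set V2) (p : V2) (b : ℤ), (b - p 1).natAbs = n →
    (∀ t : ℤ, (p 1 ≤ t ∧ t ≤ b) ∨ (b ≤ t ∧ t ≤ p 1) → (![p 0, t] : V2) ∈ S) →
    ConnIn Adj S p ![p 0, b] := by
  intro n
  induction n with
  | zero =>
      intro S p b hn hmem
      have hb : b = p 1 := by omega
      subst hb
      have := hmem (p 1) (by omega)
      rw [← veta p] at this ⊢
      exact conn_refl this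
  | succ n ih =>
      intro S p b hn hmem
      rcases lt_trichotomy (p 1) b with hlt | heq | hgt
      · set p' : V2 := ![p 0, p 1 + 1] with hp'
        have hp'0 : p' 0 = p 0 := rfl
        have hp'1 : p' 1 = p 1 + 1 := rfl
        have h1 : ConnIn Adj S p' ![p' 0, b] := by
          refine ih S p' b (by omega) ?_
          intro t ht
          rw [hp'0]
          exact hmem t (by omega)
        refine conn_trans ⟨?_, ReflTransGen.single ⟨?_, ?_⟩⟩ (by rwa [hp'0] at h1)
        · have := hmem (p 1) (by omega); rwa [← veta p] at this
        · exact adj_coords (by rw [hp'0, hp'1]; omega)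
        · exact hmem (p 1 + 1) (by omega)
      · subst heq
        have := hmem (p 1) (by omega)
        rw [← veta p] at this ⊢
        exact conn_refl this
      · set p' : V2 := ![p 0, p 1 - 1] with hp'
        have hp'0 : p' 0 = p 0 := rfl
        have hp'1 : p' 1 = p 1 - 1 := rfl
        have h1 : ConnIn Adj S p' ![p' 0, b] := by
          refine ih S p' b (by omega) ?_
          intro t ht
          rw [hp'0]
          exact hmem t (by omega)
        refine conn_trans ⟨?_, ReflTransGen.single ⟨?_, ?_⟩⟩ (by rwa [hp'0] at h1)
        · have := hmem (p 1) (by omega); rwa [← veta p] at this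
        · exact adj_coords (by rw [hp'0, hp'1]; omega)
        · exact hmem (p 1 - 1) (by omega)

def Out (M : ℤ) : Set V2 := {y | M ≤ y 0 ∨ y 0 ≤ -M ∨ M ≤ y 1 ∨ y 1 ≤ -M}

lemma out_to_corner (M : ℤ) (hM : 0 < M) (x : V2) (hx : x ∈ Out M) :
    ConnIn Adj (Out M) x ![M, M] := by
  rcases hx with h | h | h | h
  · -- M ≤ x 0 : go vertically to (x 0, M), then horizontally to (M, M)
    have h1 : ConnIn Adj (Out M) x ![x 0, M] :=
      walk_vert _ (Out M) x M rfl (fun t _ => by left; simpa using h)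
    have h2 : ConnIn Adj (Out M) (![x 0, M] : V2) ![M, M] := by
      have := walk_horiz _ (Out M) (![x 0, M] : V2) M rfl (fun t _ => by
        right; right; left; simp)
      simpa using this
    exact conn_trans h1 h2
  · have h1 : ConnIn Adj (Out M) x ![x 0, M] :=
      walk_vert _ (Out M) x M rfl (fun t _ => by right; left; simpa using h)
    have h2 : ConnIn Adj (Out M) (![x 0, M] : V2) ![M, M] := by
      have := walk_horiz _ (Out M) (![x 0, M] : V2) M rfl (fun t _ => by
        right; right; left; simp)
      simpa using this
    exact conn_trans h1 h2
  · -- M ≤ x 1 : go horizontally to (M, x 1), then vertically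
    have h1 : ConnIn Adj (Out M) x ![M, x 1] :=
      walk_horiz _ (Out M) x M rfl (fun t _ => by right; right; left; simpa using h)
    have h2 : ConnIn Adj (Out M) (![M, x 1] : V2) ![M, M] := by
      have := walk_vert _ (Out M) (![M, x 1] : V2) M rfl (fun t _ => by left; simp)
      simpa using this
    exact conn_trans h1 h2
  · have h1 : ConnIn Adj (Out M) x ![M, x 1] :=
      walk_horiz _ (Out M) x M rfl (fun t _ => by right; right; right; simpa using h)
    have h2 : ConnIn Adj (Out M) (![M, x 1] : V2) ![M, M] := by
      have := walk_vert _ (Out M) (![M, x 1] : V2) M rfl (fun t _ => by left; simp)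
      simpa using this
    exact conn_trans h1 h2

lemma box_finite (M : ℤ) : {x : V2 | ¬ (M ≤ x 0 ∨ x 0 ≤ -M ∨ M ≤ x 1 ∨ x 1 ≤ -M)}.Finite := by
  have : {x : V2 | ¬ (M ≤ x 0 ∨ x 0 ≤ -M ∨ M ≤ x 1 ∨ x 1 ≤ -M)} ⊆
      Set.pi Set.univ (fun _ : Fin 2 => Set.Icc (-M) M) := by
    intro x hx
    simp only [Set.mem_setOf_eq] at hx
    push_neg at hx
    intro i _
    fin_cases i <;> constructor <;> simp <;> omega
  exact Set.Finite.subset (Set.Finite.pi (fun _ => Set.finite_Icc _ _)) this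

lemma exists_bound {A : Set V2} (hfin : A.Finite) :
    ∃ M : ℤ, 0 < M ∧ ∀ a ∈ A, -M < a 0 ∧ a 0 < M ∧ -M < a 1 ∧ a 1 < M := by
  classical
  refine ⟨(hfin.toFinset.sup (fun a => (a 0).natAbs ⊔ (a 1).natAbs) : ℕ) + 1, by positivity, ?_⟩
  intro a ha
  have h : (a 0).natAbs ⊔ (a 1).natAbs ≤ hfin.toFinset.sup (fun a => (a 0).natAbs ⊔ (a 1).natAbs) :=
    Finset.le_sup (f := fun a : V2 => (a 0).natAbs ⊔ (a 1).natAbs) (hfin.mem_toFinset.2 ha)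
  have h1 : (a 0).natAbs ≤ hfin.toFinset.sup (fun a => (a 0).natAbs ⊔ (a 1).natAbs) :=
    le_trans (le_max_left _ _) h
  have h2 : (a 1).natAbs ≤ hfin.toFinset.sup (fun a => (a 0).natAbs ⊔ (a 1).natAbs) :=
    le_trans (le_max_right _ _) h
  generalize hg : hfin.toFinset.sup (fun a => (a 0).natAbs ⊔ (a 1).natAbs) = K at h1 h2 ⊢
  clear h hg
  omega

/-- Any two points of the infinite component(s) of `Aᶜ` are connected inside `infComp A`. -/
lemma infComp_conn {A : Set V2} (hfin : A.Finite) {v w : V2}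
    (hv : v ∈ infComp A) (hw : w ∈ infComp A) : ConnIn Adj (infComp A) v w := by
  obtain ⟨M, hM, hbd⟩ := exists_bound hfin
  have hOut : Out M ⊆ Aᶜ := by
    intro x hx hxA
    have := hbd x hxA
    rcases hx with h | h | h | h <;> omega
  -- find points of the components outside the box
  obtain ⟨o, ho, hoO⟩ := hv.2.exists_notMem_finite (box_finite M)
  obtain ⟨o', ho', ho'O⟩ := hw.2.exists_notMem_finite (box_finite M)
  have hoOut : o ∈ Out M := by
    by_contra hc; exact hoO hc
  have ho'Out : o' ∈ Out M := by
    by_contra hc; exact ho'O hc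
  have p1 : ConnIn Adj Aᶜ v o := ho
  have p2 : ConnIn Adj Aᶜ o o' := by
    have c1 := conn_mono hOut (out_to_corner M hM o hoOut)
    have c2 := conn_mono hOut (out_to_corner M hM o' ho'Out)
    exact conn_trans c1 (conn_symm (fun _ _ h => adj_symm h) c2)
  have p3 : ConnIn Adj Aᶜ o' w := conn_symm (fun _ _ h => adj_symm h) ho'
  exact conn_in_infComp hv (conn_trans (conn_trans p1 p2) p3)

end NSC
namespace NSC

open Relation

/-! ### Sums over consecutive pairs of a list -/

def pairSum (g : V2 → V2 → ℤ) : List V2 → ℤ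
  | [] => 0
  | [_] => 0
  | x :: y :: t => g x y + pairSum g (y :: t)

lemma pairSum_congr {g g' : V2 → V2 → ℤ} (h : ∀ p q, Adj p q → g p q = g' p q) :
    ∀ {L : List V2}, L.Chain' Adj → pairSum g L = pairSum g' L
  | [], _ => rfl
  | [_], _ => rfl
  | x :: y :: t, hc => by
      rw [List.Chain', List.isChain_cons_cons] at hc
      rw [pairSum, pairSum, h x y hc.1, pairSum_congr h hc.2]

lemma pairSum_add (g g' : V2 → V2 → ℤ) :
    ∀ (L : List V2), pairSum (fun p q => g p q + g' p q) L = pairSum g L + pairSum g' L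
  | [] => rfl
  | [_] => rfl
  | x :: y :: t => by
      rw [pairSum, pairSum, pairSum, pairSum_add g g' (y :: t)]; ring

lemma pairSum_tele (φ : V2 → ℤ) :
    ∀ (t : List V2) (x : V2), pairSum (fun p q => φ q - φ p) (x :: t)
      = φ ((x :: t).getLast (by simp)) - φ x
  | [], x => by simp [pairSum]
  | y :: t, x => by
      rw [pairSum, pairSum_tele φ t y]
      have h : (x :: y :: t).getLast (by simp) = (y :: t).getLast (by simp) :=
        List.getLast_cons (by simp)
      rw [h]; ring

lemma pairSum_zero {g : V2 → V2 → ℤ} :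
    ∀ {L : List V2}, (∀ p ∈ L, ∀ q ∈ L, g p q = 0) → pairSum g L = 0
  | [], _ => rfl
  | [_], _ => rfl
  | x :: y :: t, h => by
      rw [pairSum, h x (by simp) y (by simp), pairSum_zero (fun p hp q hq =>
        h p (by simp; right; simpa using hp) q (by simp; right; simpa using hq))]
      ring

lemma pairSum_neg (g : V2 → V2 → ℤ) :
    ∀ (L : List V2), pairSum (fun p q => - g p q) L = - pairSum g L
  | [] => rfl
  | [_] => by simp [pairSum]
  | x :: y :: t => by
      rw [pairSum, pairSum, pairSum_neg g (y :: t)]; ring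

/-! ### winding count and edge traversal count -/

/-- signed crossings of the step `p → q` with the rightward ray from `a`
(at height `a 1 + 1/2`). -/
def wcross (a p q : V2) : ℤ :=
  (if p 1 = a 1 ∧ a 0 < p 0 ∧ q 0 = p 0 ∧ q 1 = p 1 + 1 then 1 else 0)
  - (if q 1 = a 1 ∧ a 0 < q 0 ∧ p 0 = q 0 ∧ p 1 = q 1 + 1 then 1 else 0)

/-- signed indicator that the step `p → q` traverses the edge `u → v`. -/
def eStep (u v p q : V2) : ℤ :=
  (if p = u ∧ q = v then 1 else 0) - (if p = v ∧ q = u then 1 else 0)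

def fwind (L : List V2) (a : V2) : ℤ := pairSum (wcross a) L

def eT (L : List V2) (u v : V2) : ℤ := pairSum (eStep u v) L

lemma eT_zero_left {L : List V2} {u v : V2} (hu : u ∉ L) : eT L u v = 0 := by
  refine pairSum_zero (fun p hp q hq => ?_)
  unfold eStep
  rw [if_neg, if_neg]
  · ring
  · rintro ⟨h1, h2⟩; exact hu (h2 ▸ hq)
  · rintro ⟨h1, h2⟩; exact hu (h1 ▸ hp)

lemma eT_zero_right {L : List V2} {u v : V2} (hv : v ∉ L) : eT L u v = 0 := by
  refine pairSum_zero (fun p hp q hq => ?_)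
  unfold eStep
  rw [if_neg, if_neg]
  · ring
  · rintro ⟨h1, h2⟩; exact hv (h1 ▸ hp)
  · rintro ⟨h1, h2⟩; exact hv (h2 ▸ hq)

lemma eT_swap (L : List V2) (u v : V2) : eT L u v = - eT L v u := by
  unfold eT
  rw [← pairSum_neg]
  congr 1
  funext p q
  unfold eStep
  ring

set_option maxHeartbeats 2000000 in
/-- pointwise identity for shifting the base point up -/
lemma ptV (b p q : V2) (h : Adj p q) :
    wcross (b + E2) p q = wcross b p q
      + ((if q 1 = b 1 + 1 ∧ b 0 < q 0 then (-1 : ℤ) else 0)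
          - (if p 1 = b 1 + 1 ∧ b 0 < p 0 then (-1 : ℤ) else 0))
      + eStep (b + E2) (b + E2 + E1) p q := by
  have hadj := (adj_iff p q).1 h
  simp only [wcross, eStep, veq_iff, Pi.add_apply, E1_0, E1_1, E2_0, E2_1, add_zero]
  generalize b 0 = b0 at *
  generalize b 1 = b1 at *
  generalize p 0 = p0 at *
  generalize p 1 = p1 at *
  generalize q 0 = q0 at *
  generalize q 1 = q1 at *
  have hcase : (q0 = p0 ∧ q1 = p1 + 1) ∨ (q0 = p0 ∧ p1 = q1 + 1) ∨ (q1 = p1 ∧ q0 = p0 + 1) ∨ (q1 = p1 ∧ p0 = q0 + 1) := by omega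
  rcases hcase with ⟨h1, h2⟩ | ⟨h1, h2⟩ | ⟨h1, h2⟩ | ⟨h1, h2⟩ <;> subst h1 <;> subst h2 <;>
    split_ifs <;> omega

set_option maxHeartbeats 2000000 in
/-- pointwise identity for shifting the base point right -/
lemma ptH (b p q : V2) (h : Adj p q) :
    wcross (b + E1) p q = wcross b p q - eStep (b + E1) (b + E1 + E2) p q := by
  have hadj := (adj_iff p q).1 h
  simp only [wcross, eStep, veq_iff, Pi.add_apply, E1_0, E1_1, E2_0, E2_1, add_zero]
  generalize b 0 = b0 at *
  generalize b 1 = b1 at *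
  generalize p 0 = p0 at *
  generalize p 1 = p1 at *
  generalize q 0 = q0 at *
  generalize q 1 = q1 at *
  have hcase : (q0 = p0 ∧ q1 = p1 + 1) ∨ (q0 = p0 ∧ p1 = q1 + 1) ∨ (q1 = p1 ∧ q0 = p0 + 1) ∨ (q1 = p1 ∧ p0 = q0 + 1) := by omega
  rcases hcase with ⟨h1, h2⟩ | ⟨h1, h2⟩ | ⟨h1, h2⟩ | ⟨h1, h2⟩ <;> subst h1 <;> subst h2 <;>
    split_ifs <;> omega

lemma fwind_up {L : List V2} (hc : L.Chain' Adj) (hne : L ≠ [])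
    (hcl : L.getLast hne = L.head hne) (b : V2) :
    fwind L (b + E2) = fwind L b + eT L (b + E2) (b + E2 + E1) := by
  obtain ⟨x, t, rfl⟩ := List.exists_cons_of_ne_nil hne
  set φ : V2 → ℤ := fun x => if x 1 = b 1 + 1 ∧ b 0 < x 0 then (-1 : ℤ) else 0 with hφ
  have key : ∀ p q, Adj p q → wcross (b + E2) p q
      = wcross b p q + ((φ q - φ p) + eStep (b + E2) (b + E2 + E1) p q) := by
    intro p q h
    have := ptV b p q h
    rw [hφ]
    linarith [this]
  have h1 : fwind (x :: t) (b + E2)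
      = pairSum (fun p q => wcross b p q + ((φ q - φ p) + eStep (b + E2) (b + E2 + E1) p q)) (x :: t) :=
    pairSum_congr key hc
  rw [h1, pairSum_add, pairSum_add, pairSum_tele]
  have : φ ((x :: t).getLast (by simp)) = φ x := by rw [hcl]; rfl
  rw [this]
  unfold fwind eT
  ring

lemma fwind_right {L : List V2} (hc : L.Chain' Adj) (b : V2) :
    fwind L (b + E1) = fwind L b - eT L (b + E1) (b + E1 + E2) := by
  have h1 : fwind L (b + E1)
      = pairSum (fun p q => wcross b p q + (- eStep (b + E1) (b + E1 + E2) p q)) L := by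
    refine pairSum_congr (fun p q h => ?_) hc
    have := ptH b p q h
    linarith [this]
  rw [h1, pairSum_add, pairSum_neg]
  unfold fwind eT
  ring

end NSC
namespace NSC

open Relation

/-! ### invariance of `fwind` under `*`-steps off the walk -/

section moves

variable {L : List V2}

lemma up_invar (hc : L.Chain' Adj) (hne : L ≠ []) (hcl : L.getLast hne = L.head hne)
    (x : V2) (hx : (x + E2) ∉ L) : fwind L (x + E2) = fwind L x := by
  rw [fwind_up hc hne hcl x, eT_zero_left hx]; ring

lemma right_invar (hc : L.Chain' Adj) (x : V2) (hx : (x + E1) ∉ L) :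
    fwind L (x + E1) = fwind L x := by
  rw [fwind_right hc x, eT_zero_left hx]; ring

lemma down_aux (hc : L.Chain' Adj) (hne : L ≠ []) (hcl : L.getLast hne = L.head hne)
    (x : V2) (hx : x ∉ L) : fwind L x = fwind L (x - E2) := by
  have h := fwind_up hc hne hcl (x - E2)
  rw [sub_add_cancel] at h
  rw [h, eT_zero_left hx]; ring

lemma diag_pp_invar (hc : L.Chain' Adj) (hne : L ≠ []) (hcl : L.getLast hne = L.head hne)
    (x : V2) (hy : (x + E1 + E2) ∉ L) :
    fwind L (x + E1 + E2) = fwind L x := by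
  have h1 : fwind L (x + E2) = fwind L x := by
    rw [fwind_up hc hne hcl x]
    have e : x + E2 + E1 = x + E1 + E2 := by ring
    rw [e, eT_zero_right hy]; ring
  have h2 : fwind L (x + E1 + E2) = fwind L (x + E2) := by
    have h := fwind_right hc (x + E2)
    have e1 : x + E2 + E1 = x + E1 + E2 := by ring
    rw [e1] at h
    rw [h, eT_zero_left hy]; ring
  rw [h2, h1]

lemma diag_pm_invar (hc : L.Chain' Adj) (hne : L ≠ []) (hcl : L.getLast hne = L.head hne)
    (x : V2) (hx : x ∉ L) (hy : (x + E1 - E2) ∉ L) :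
    fwind L (x + E1 - E2) = fwind L x := by
  have h1 : fwind L (x - E2) = fwind L x := (down_aux hc hne hcl x hx).symm
  have h2 : fwind L (x + E1 - E2) = fwind L (x - E2) := by
    have h := fwind_right hc (x - E2)
    have e1 : x - E2 + E1 = x + E1 - E2 := by ring
    rw [e1] at h
    rw [h, eT_zero_left hy]; ring
  rw [h2, h1]

lemma star_cases {x y : V2} (h : StarAdj x y) :
    y = x + E1 ∨ x = y + E1 ∨ y = x + E2 ∨ x = y + E2 ∨
    y = x + E1 + E2 ∨ x = y + E1 + E2 ∨ y = x + E1 - E2 ∨ x = y + E1 - E2 := by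
  rw [starAdj_iff] at h
  obtain ⟨hne', h0, h1⟩ := h
  have e0 : y 0 = x 0 - 1 ∨ y 0 = x 0 ∨ y 0 = x 0 + 1 := by omega
  have e1 : y 1 = x 1 - 1 ∨ y 1 = x 1 ∨ y 1 = x 1 + 1 := by omega
  rcases e0 with f0 | f0 | f0 <;> rcases e1 with f1 | f1 | f1
  · right; right; right; right; right; left
    funext i; fin_cases i <;> simp [Pi.add_apply, Pi.sub_apply] <;> omega
  · right; left
    funext i; fin_cases i <;> simp [Pi.add_apply, Pi.sub_apply] <;> omega
  · right; right; right; right; right; right; right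
    funext i; fin_cases i <;> simp [Pi.add_apply, Pi.sub_apply] <;> omega
  · right; right; right; left
    funext i; fin_cases i <;> simp [Pi.add_apply, Pi.sub_apply] <;> omega
  · exact (hne' ⟨f0.symm, f1.symm⟩).elim
  · right; right; left
    funext i; fin_cases i <;> simp [Pi.add_apply, Pi.sub_apply] <;> omega
  · right; right; right; right; right; right; left
    funext i; fin_cases i <;> simp [Pi.add_apply, Pi.sub_apply] <;> omega
  · left
    funext i; fin_cases i <;> simp [Pi.add_apply, Pi.sub_apply] <;> omega
  · right; right; right; right; left
    funext i; fin_cases i <;> simp [Pi.add_apply, Pi.sub_apply] <;> omega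

lemma star_invar (hc : L.Chain' Adj) (hne : L ≠ []) (hcl : L.getLast hne = L.head hne)
    {x y : V2} (h : StarAdj x y) (hx : x ∉ L) (hy : y ∉ L) :
    fwind L x = fwind L y := by
  rcases star_cases h with e | e | e | e | e | e | e | e
  · rw [e]; exact (right_invar hc _ (e ▸ hy)).symm
  · rw [e]; exact right_invar hc _ (e ▸ hx)
  · rw [e]; exact (up_invar hc hne hcl _ (e ▸ hy)).symm
  · rw [e]; exact up_invar hc hne hcl _ (e ▸ hx)
  · rw [e]; exact (diag_pp_invar hc hne hcl _ (e ▸ hy)).symm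
  · rw [e]; exact diag_pp_invar hc hne hcl _ (e ▸ hx)
  · rw [e]; exact (diag_pm_invar hc hne hcl _ hx (e ▸ hy)).symm
  · rw [e]; exact diag_pm_invar hc hne hcl _ hy (e ▸ hx)

lemma fwind_const_on_path (hc : L.Chain' Adj) (hne : L ≠ [])
    (hcl : L.getLast hne = L.head hne) {S : Set V2} (hS : ∀ s ∈ S, s ∉ L) {x y : V2}
    (h : ConnIn StarAdj S x y) : fwind L x = fwind L y := by
  obtain ⟨hxS, hp⟩ := h
  induction hp with
  | refl => rfl
  | @tail b c hab hbc ih =>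
      have hbS : b ∈ S := conn_mem_right (⟨hxS, hab⟩ : ConnIn StarAdj S x b)
      rw [ih, star_invar hc hne hcl hbc.1 (hS b hbS) (hS c hbc.2)]

end moves

/-! ### edge traversals at the base point of a closed walk -/

lemma pairSum_estep_aux (z x : V2) (hxz : x ≠ z) :
    ∀ (l : List V2) (y : V2), y ≠ z → z ∉ l →
      pairSum (eStep z x) (y :: (l ++ [z]))
        = -(if (y :: l).getLast (by simp) = x then (1 : ℤ) else 0)
  | [], y, hy, _ => by
      show eStep z x y z + 0 = _
      unfold eStep
      rw [if_neg (by rintro ⟨h1, -⟩; exact hy h1)]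
      simp [List.getLast]
      congr
  | y' :: t, y, hy, hzl => by
      have hy' : y' ≠ z := by rintro rfl; exact hzl (by simp)
      have hzt : z ∉ t := fun ht => hzl (by simp [ht])
      have ih := pairSum_estep_aux z x hxz t y' hy' hzt
      show eStep z x y y' + pairSum (eStep z x) (y' :: (t ++ [z])) = _
      rw [ih]
      unfold eStep
      rw [if_neg (by rintro ⟨h1, -⟩; exact hy h1),
          if_neg (by rintro ⟨-, h2⟩; exact hy' h2)]
      have hgl : ((y :: y' :: t).getLast (by simp)) = ((y' :: t).getLast (by simp)) :=
        List.getLast_cons (by simp)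
      rw [hgl]; ring

lemma eT_closed_z {z x : V2} (l : List V2) (hl : l ≠ []) (hzl : z ∉ l) (hxz : x ≠ z) :
    eT (z :: (l ++ [z])) z x
      = (if l.head hl = x then (1 : ℤ) else 0) - (if l.getLast hl = x then 1 else 0) := by
  obtain ⟨y, t, rfl⟩ := List.exists_cons_of_ne_nil hl
  have hy : y ≠ z := by rintro rfl; exact hzl (by simp)
  have hzt : z ∉ t := fun ht => hzl (by simp [ht])
  show eStep z x z y + pairSum (eStep z x) (y :: (t ++ [z])) = _
  rw [pairSum_estep_aux z x hxz t y hy hzt]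
  unfold eStep
  have h1 : (if z = z ∧ y = x then (1:ℤ) else 0) = (if y = x then 1 else 0) := by simp
  have h2 : (if z = x ∧ y = z then (1:ℤ) else 0) = 0 := by
    rw [if_neg]; rintro ⟨hzx, -⟩; exact hxz hzx.symm
  rw [h1, h2, List.head_cons]
  have hgl : ((y :: t).getLast (by simp) : V2) = (y :: t).getLast hl := rfl
  rw [hgl]
  ring

end NSC
namespace NSC

open Relation
open Fin.NatCast

/-! ### the ring of eight cells around a vertex -/

def dir : Fin 8 → V2 :=
  ![![1,0], ![1,1], ![0,1], ![-1,1], ![-1,0], ![-1,-1], ![0,-1], ![1,-1]]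

lemma dir_comp :
    (dir 0 0 = 1 ∧ dir 0 1 = 0) ∧ (dir 1 0 = 1 ∧ dir 1 1 = 1) ∧
    (dir 2 0 = 0 ∧ dir 2 1 = 1) ∧ (dir 3 0 = -1 ∧ dir 3 1 = 1) ∧
    (dir 4 0 = -1 ∧ dir 4 1 = 0) ∧ (dir 5 0 = -1 ∧ dir 5 1 = -1) ∧
    (dir 6 0 = 0 ∧ dir 6 1 = -1) ∧ (dir 7 0 = 1 ∧ dir 7 1 = -1) := by decide

lemma dir_zero : dir 0 = E1 := by funext i; fin_cases i <;> rfl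

lemma dir_two : dir 2 = E2 := by funext i; fin_cases i <;> rfl

lemma dir_four (z : V2) : z + dir 4 = z - E1 := by
  funext i
  fin_cases i <;>
    simp only [Fin.mk_zero, Fin.mk_one, Pi.add_apply, Pi.sub_apply, E1_0, E1_1,
      dir_comp.2.2.2.2.1.1, dir_comp.2.2.2.2.1.2] <;> ring

lemma dir_inj : Function.Injective dir := by
  intro a b h
  fin_cases a <;> fin_cases b <;> first | rfl | exact absurd h (by decide)

lemma dir_ne_zero : ∀ k : Fin 8, dir k ≠ 0 := by decide

lemma ring_ne_z (z : V2) (k : Fin 8) : z + dir k ≠ z := by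
  intro h
  exact dir_ne_zero k (by rwa [add_eq_left] at h)

lemma adj_translate (z a b : V2) : Adj (z + a) (z + b) ↔ Adj a b := by
  unfold Adj
  have e : ∀ i : Fin 2, |(z + a) i - (z + b) i| = |a i - b i| := by
    intro i
    congr 1
    simp only [Pi.add_apply]
    ring
  rw [Fin.sum_univ_two, Fin.sum_univ_two, e 0, e 1]

lemma dir_adj' : ∀ k : Fin 8,
    (dir k 0 - dir (k + 1) 0).natAbs + (dir k 1 - dir (k + 1) 1).natAbs = 1 := by decide

lemma ring_adj (z : V2) (k : Fin 8) : Adj (z + dir k) (z + dir (k + 1)) :=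
  (adj_translate z _ _).2 ((adj_iff _ _).2 (dir_adj' k))

lemma star_dir : ∀ k : Fin 8,
    ¬ (dir k 0 = 0 ∧ dir k 1 = 0) ∧ (dir k 0).natAbs ≤ 1 ∧ (dir k 1).natAbs ≤ 1 := by decide

lemma ring_starAdj (z : V2) (k : Fin 8) : StarAdj (z + dir k) z := by
  rw [starAdj_iff]
  have h0 : (z + dir k) 0 - z 0 = dir k 0 := by simp [Pi.add_apply]
  have h1 : (z + dir k) 1 - z 1 = dir k 1 := by simp [Pi.add_apply]
  have hs := star_dir k
  refine ⟨?_, by rw [h0]; exact hs.2.1, by rw [h1]; exact hs.2.2⟩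
  rintro ⟨e0, e1⟩
  exact hs.1 ⟨by omega, by omega⟩

lemma adj_z_cases {v z : V2} (h : Adj v z) :
    ∃ i : Fin 8, (i = 0 ∨ i = 2 ∨ i = 4 ∨ i = 6) ∧ v = z + dir i := by
  have hco := (adj_iff v z).1 h
  have hd := dir_comp
  have e0 : v 0 = z 0 - 1 ∨ v 0 = z 0 ∨ v 0 = z 0 + 1 := by omega
  have e1 : v 1 = z 1 - 1 ∨ v 1 = z 1 ∨ v 1 = z 1 + 1 := by omega
  rcases e0 with f0 | f0 | f0 <;> rcases e1 with f1 | f1 | f1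
  · exact absurd hco (by omega)
  · refine ⟨4, by norm_num, ?_⟩
    funext i
    fin_cases i <;> simp only [Fin.mk_zero, Fin.mk_one, Pi.add_apply, hd.2.2.2.2.1.1, hd.2.2.2.2.1.2] <;> omega
  · exact absurd hco (by omega)
  · refine ⟨6, by norm_num, ?_⟩
    funext i
    fin_cases i <;> simp only [Fin.mk_zero, Fin.mk_one, Pi.add_apply, hd.2.2.2.2.2.2.1.1, hd.2.2.2.2.2.2.1.2] <;> omega
  · exact absurd hco (by omega)
  · refine ⟨2, by norm_num, ?_⟩
    funext i
    fin_cases i <;> simp only [Fin.mk_zero, Fin.mk_one, Pi.add_apply, hd.2.2.1.1, hd.2.2.1.2] <;> omega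
  · exact absurd hco (by omega)
  · refine ⟨0, by norm_num, ?_⟩
    funext i
    fin_cases i <;> simp only [Fin.mk_zero, Fin.mk_one, Pi.add_apply, hd.1.1, hd.1.2] <;> omega
  · exact absurd hco (by omega)

/-! ### walking along the ring inside the infinite component -/

lemma ring_walk (A : Set V2) (z : V2) (i : Fin 8) :
    ∀ n : ℕ, z + dir i ∈ infComp A →
      (∀ t : ℕ, 0 < t → t < n → z + dir (i + (t : Fin 8)) ∈ infComp A) →
      z + dir (i + (n : Fin 8)) ∈ infComp A →
      ConnIn Adj (NinfStar A z) (z + dir i) (z + dir (i + (n : Fin 8))) := by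
  intro n
  induction n with
  | zero =>
      intro hbase _ _
      simp only [Nat.cast_zero, add_zero]
      exact conn_refl ⟨hbase, ring_starAdj z i⟩
  | succ n ih =>
      intro hbase hint hend
      have hprev : z + dir (i + (n : Fin 8)) ∈ infComp A := by
        rcases Nat.eq_zero_or_pos n with rfl | hn
        · simpa using hbase
        · exact hint n hn (by omega)
      have hconn := ih hbase (fun t ht htn => hint t ht (by omega)) hprev
      have hstep : Adj (z + dir (i + (n : Fin 8))) (z + dir (i + ((n + 1 : ℕ) : Fin 8))) := by
        have e : ((n + 1 : ℕ) : Fin 8) = (n : Fin 8) + 1 := by push_cast; ring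
        rw [e, ← add_assoc]
        exact ring_adj z (i + (n : Fin 8))
      exact conn_tail hconn hstep ⟨hend, ring_starAdj z _⟩

lemma first_block (A : Set V2) (z : V2) (i : Fin 8) :
    ∀ n : ℕ, z + dir i ∈ infComp A →
      ¬ (∀ t : ℕ, 0 < t → t < n → z + dir (i + (t : Fin 8)) ∈ infComp A) →
      ∃ t : ℕ, 0 < t ∧ t < n ∧ z + dir (i + (t : Fin 8)) ∈ A := by
  intro n
  induction n with
  | zero => intro _ hbl; exact absurd (fun t ht htn => absurd htn (by omega)) hbl
  | succ n ih =>
      intro hbase hbl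
      by_cases hall : ∀ t : ℕ, 0 < t → t < n → z + dir (i + (t : Fin 8)) ∈ infComp A
      · have hn0 : 0 < n := by
          by_contra hn
          have hn' : n = 0 := by omega
          subst hn'
          exact hbl (fun t ht htn => absurd htn (by omega))
        have hnblock : z + dir (i + (n : Fin 8)) ∉ infComp A := by
          intro hmem
          refine hbl (fun t ht htn => ?_)
          rcases Nat.lt_or_ge t n with hlt | hge
          · exact hall t ht hlt
          · have ht' : t = n := by omega
            subst ht'; exact hmem
        have hprev : z + dir (i + ((n - 1 : ℕ) : Fin 8)) ∈ infComp A := by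
          rcases Nat.eq_or_lt_of_le hn0 with h1 | h1
          · have e : n - 1 = 0 := by omega
            rw [e]; simpa using hbase
          · exact hall (n - 1) (by omega) (by omega)
        have hadj : Adj (z + dir (i + ((n - 1 : ℕ) : Fin 8))) (z + dir (i + (n : Fin 8))) := by
          have e : ((n : ℕ) : Fin 8) = ((n - 1 : ℕ) : Fin 8) + 1 := by
            have e2 : n = (n - 1) + 1 := by omega
            conv_lhs => rw [e2]
            push_cast
            ring
          rw [e, ← add_assoc]
          exact ring_adj z _
        have hinA : z + dir (i + (n : Fin 8)) ∈ A := by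
          by_contra hnA
          exact hnblock (infComp_extend hprev hnA hadj)
        exact ⟨n, hn0, by omega, hinA⟩
      · obtain ⟨t, ht, htn, htA⟩ := ih hbase hall
        exact ⟨t, ht, by omega, htA⟩

end NSC
namespace NSC

open Relation

def hval (te tn tw : ℤ) (k : Fin 8) : ℤ :=
  if k = 3 ∨ k = 4 then tn
  else if k = 5 then tn + tw
  else if k = 6 ∨ k = 7 then -te
  else 0

lemma hval_0 (te tn tw : ℤ) : hval te tn tw 0 = 0 := by rfl
lemma hval_1 (te tn tw : ℤ) : hval te tn tw 1 = 0 := by rfl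
lemma hval_2 (te tn tw : ℤ) : hval te tn tw 2 = 0 := by rfl
lemma hval_3 (te tn tw : ℤ) : hval te tn tw 3 = tn := by rfl
lemma hval_4 (te tn tw : ℤ) : hval te tn tw 4 = tn := by rfl
lemma hval_5 (te tn tw : ℤ) : hval te tn tw 5 = tn + tw := by rfl
lemma hval_6 (te tn tw : ℤ) : hval te tn tw 6 = -te := by rfl
lemma hval_7 (te tn tw : ℤ) : hval te tn tw 7 = -te := by rfl

set_option maxHeartbeats 2000000 in
lemma final_num : ∀ (i j μ1 μ2 : Fin 8),
    (i = 0 ∨ i = 2 ∨ i = 4 ∨ i = 6) → (j = 0 ∨ j = 2 ∨ j = 4 ∨ j = 6) → i ≠ j →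
    0 < μ1.val → μ1.val < (j - i).val → 0 < μ2.val → μ2.val < (i - j).val →
    hval ((if i = 0 then 1 else 0) - (if j = 0 then 1 else 0))
         ((if i = 2 then 1 else 0) - (if j = 2 then 1 else 0))
         ((if i = 4 then 1 else 0) - (if j = 4 then 1 else 0)) (i + μ1)
    ≠ hval ((if i = 0 then 1 else 0) - (if j = 0 then 1 else 0))
         ((if i = 2 then 1 else 0) - (if j = 2 then 1 else 0))
         ((if i = 4 then 1 else 0) - (if j = 4 then 1 else 0)) (j + μ2) := by decide

lemma dir_one : dir 1 = E1 + E2 := by funext i; fin_cases i <;> rfl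
lemma dir_three (z : V2) : z + dir 3 = z - E1 + E2 := by
  funext i
  fin_cases i <;>
    simp only [Fin.mk_zero, Fin.mk_one, Pi.add_apply, Pi.sub_apply, E1_0, E1_1, E2_0, E2_1,
      dir_comp.2.2.2.1.1, dir_comp.2.2.2.1.2] <;> ring
lemma dir_five (z : V2) : z + dir 5 = z - E1 - E2 := by
  funext i
  fin_cases i <;>
    simp only [Fin.mk_zero, Fin.mk_one, Pi.add_apply, Pi.sub_apply, E1_0, E1_1, E2_0, E2_1,
      dir_comp.2.2.2.2.2.1.1, dir_comp.2.2.2.2.2.1.2] <;> ring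
lemma dir_six (z : V2) : z + dir 6 = z - E2 := by
  funext i
  fin_cases i <;>
    simp only [Fin.mk_zero, Fin.mk_one, Pi.add_apply, Pi.sub_apply, E1_0, E1_1, E2_0, E2_1,
      dir_comp.2.2.2.2.2.2.1.1, dir_comp.2.2.2.2.2.2.1.2] <;> ring
lemma dir_seven (z : V2) : z + dir 7 = z + E1 - E2 := by
  funext i
  fin_cases i <;>
    simp only [Fin.mk_zero, Fin.mk_one, Pi.add_apply, Pi.sub_apply, E1_0, E1_1, E2_0, E2_1,
      dir_comp.2.2.2.2.2.2.2.1, dir_comp.2.2.2.2.2.2.2.2] <;> ring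

/-- The value of the winding count of a closed walk `z :: l ++ [z]` at each of the
eight cells surrounding `z`, relative to its value at `z`. -/
lemma hvec_dispatch {z : V2} {l : List V2} (hc : (z :: (l ++ [z])).Chain' Adj)
    (k : Fin 8) (ha : (z + dir k) ∉ (z :: (l ++ [z]))) :
    fwind (z :: (l ++ [z])) (z + dir k)
      = fwind (z :: (l ++ [z])) z
        + hval (eT (z :: (l ++ [z])) z (z + E1)) (eT (z :: (l ++ [z])) z (z + E2))
            (eT (z :: (l ++ [z])) z (z - E1)) k := by
  have hne : (z :: (l ++ [z])) ≠ [] := by simp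
  have hcl : (z :: (l ++ [z])).getLast hne = (z :: (l ++ [z])).head hne := by
    show ((z :: l) ++ [z]).getLast (by simp) = z
    exact List.getLast_append _
  -- the four cardinal computations with no side conditions
  have hW : fwind (z :: (l ++ [z])) (z - E1)
      = fwind (z :: (l ++ [z])) z + eT (z :: (l ++ [z])) z (z + E2) := by
    have h := fwind_right hc (z - E1)
    rw [show z - E1 + E1 = z from by ring] at h
    linarith [h]
  have hS : fwind (z :: (l ++ [z])) (z - E2)
      = fwind (z :: (l ++ [z])) z - eT (z :: (l ++ [z])) z (z + E1) := by
    have h := fwind_up hc hne hcl (z - E2)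
    rw [show z - E2 + E2 = z from by ring] at h
    linarith [h]
  fin_cases k
  -- k = 0 : East
  · show fwind (z :: (l ++ [z])) (z + dir 0) = _ + hval _ _ _ 0
    have ha' : (z + E1) ∉ (z :: (l ++ [z])) := by rw [← dir_zero]; exact ha
    rw [dir_zero, hval_0]
    have h := fwind_right hc z
    rw [eT_zero_left ha'] at h
    linarith [h]
  -- k = 1 : North-East
  · show fwind (z :: (l ++ [z])) (z + dir 1) = _ + hval _ _ _ 1
    have ha' : (z + E1 + E2) ∉ (z :: (l ++ [z])) := by
      rw [show z + E1 + E2 = z + (E1 + E2) from by ring, ← dir_one]; exact ha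
    rw [show z + dir 1 = z + E1 + E2 from by rw [dir_one]; ring, hval_1]
    have h1 : fwind (z :: (l ++ [z])) (z + E1) = fwind (z :: (l ++ [z])) z := by
      have h := fwind_right hc z
      rw [eT_zero_right ha'] at h
      linarith [h]
    have h2 := fwind_up hc hne hcl (z + E1)
    rw [eT_zero_left ha'] at h2
    linarith [h1, h2]
  -- k = 2 : North
  · show fwind (z :: (l ++ [z])) (z + dir 2) = _ + hval _ _ _ 2
    have ha' : (z + E2) ∉ (z :: (l ++ [z])) := by rw [← dir_two]; exact ha
    rw [dir_two, hval_2]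
    have h := fwind_up hc hne hcl z
    rw [eT_zero_left ha'] at h
    linarith [h]
  -- k = 3 : North-West
  · show fwind (z :: (l ++ [z])) (z + dir 3) = _ + hval _ _ _ 3
    have ha' : (z - E1 + E2) ∉ (z :: (l ++ [z])) := by rw [← dir_three]; exact ha
    rw [dir_three, hval_3]
    have h2 := fwind_up hc hne hcl (z - E1)
    rw [eT_zero_left ha'] at h2
    linarith [hW, h2]
  -- k = 4 : West
  · show fwind (z :: (l ++ [z])) (z + dir 4) = _ + hval _ _ _ 4
    rw [dir_four, hval_4]
    exact hW
  -- k = 5 : South-West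
  · show fwind (z :: (l ++ [z])) (z + dir 5) = _ + hval _ _ _ 5
    rw [dir_five, hval_5]
    have h := fwind_up hc hne hcl (z - E1 - E2)
    rw [show z - E1 - E2 + E2 = z - E1 from by ring,
        show z - E1 + E1 = z from by ring] at h
    rw [eT_swap _ (z - E1) z] at h
    linarith [hW, h]
  -- k = 6 : South
  · show fwind (z :: (l ++ [z])) (z + dir 6) = _ + hval _ _ _ 6
    rw [dir_six, hval_6]
    linarith [hS]
  -- k = 7 : South-East
  · show fwind (z :: (l ++ [z])) (z + dir 7) = _ + hval _ _ _ 7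
    have ha' : (z + E1 - E2) ∉ (z :: (l ++ [z])) := by rw [← dir_seven]; exact ha
    rw [dir_seven, hval_7]
    have h2 := fwind_right hc (z - E2)
    rw [show z - E2 + E1 = z + E1 - E2 from by ring,
        show z + E1 - E2 + E2 = z + E1 from by ring] at h2
    rw [eT_zero_left ha'] at h2
    linarith [hS, h2]

end NSC
namespace NSC

open Relation

lemma chain_mem {S : Set V2} {R : V2 → V2 → Prop} :
    ∀ {l : List V2} {x : V2}, List.Chain (fun a b => R a b ∧ b ∈ S) x l →
      ∀ y ∈ l, y ∈ S
  | [], _, _ => by simp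
  | b :: t, x, h => by
      rcases h with _ | _ | ⟨hxb, ht⟩
      intro y hy
      rcases List.mem_cons.1 hy with rfl | hyt
      · exact hxb.2
      · exact chain_mem ht y hyt

lemma chain_append_singleton {R : V2 → V2 → Prop} :
    ∀ {t : List V2} {x y : V2}, List.Chain R x t →
      R ((x :: t).getLast (by simp)) y → List.Chain R x (t ++ [y])
  | [], x, y, _, hR => List.Chain.cons hR List.Chain.nil
  | b :: t, x, y, h, hR => by
      rcases h with _ | _ | ⟨hxb, ht⟩
      refine List.Chain.cons hxb (chain_append_singleton ht ?_)
      have e : ((x :: b :: t).getLast (by simp)) = ((b :: t).getLast (by simp)) :=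
        List.getLast_cons (by simp)
      rw [← e]
      exact hR

end NSC

open Fin.NatCast in
open NSC in
/-- For a nonempty finite `*`-connected `A ⊆ ℤ²`, any vertex of `A`
that is not a `*`-cut vertex of `A` is a marginal vertex of `A`. -/
theorem not_starCut_implies_marginal (A : Set (Vtx 2)) (hne : A.Nonempty)
    (hfin : A.Finite) (hconn : IsStarConn A) (z : Vtx 2) (hz : z ∈ A)
    (hcut : ¬ IsStarCut A z) :
    IsMarginal A z := by
  classical
  refine ⟨hz, ?_⟩
  intro v hv w hw
  have hstar : IsStarConn (A \ {z}) := by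
    by_contra hns
    exact hcut ⟨hz, hns⟩
  obtain ⟨i, hi4, hvi⟩ := adj_z_cases hv.2
  obtain ⟨j, hj4, hwj⟩ := adj_z_cases hw.2
  subst hvi
  subst hwj
  by_cases hij : i = j
  · subst hij
    exact conn_refl ⟨hv.1, ring_starAdj z i⟩
  · -- set up the two arcs
    have hjisub : (j - i : Fin 8) ≠ 0 := sub_ne_zero.2 (Ne.symm hij)
    have hijsub : (i - j : Fin 8) ≠ 0 := sub_ne_zero.2 hij
    have hn1 : 0 < (j - i : Fin 8).val := Fin.pos_iff_ne_zero.2 hjisub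
    have hn2 : 0 < (i - j : Fin 8).val := Fin.pos_iff_ne_zero.2 hijsub
    have hn18 : (j - i : Fin 8).val < 8 := (j - i).isLt
    have hn28 : (i - j : Fin 8).val < 8 := (i - j).isLt
    have e1 : i + (((j - i : Fin 8).val : ℕ) : Fin 8) = j := by
      rw [Fin.cast_val_eq_self, add_comm, sub_add_cancel]
    have e2 : j + (((i - j : Fin 8).val : ℕ) : Fin 8) = i := by
      rw [Fin.cast_val_eq_self, add_comm, sub_add_cancel]
    by_cases hall1 : ∀ t : ℕ, 0 < t → t < (j - i : Fin 8).val →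
        z + dir (i + (t : Fin 8)) ∈ infComp A
    · have hconn' := ring_walk A z i (j - i : Fin 8).val hv.1 hall1
        (by rw [e1]; exact hw.1)
      rw [e1] at hconn'
      exact hconn'
    · obtain ⟨m1, hm1, hm1n, ha1⟩ := first_block A z i (j - i : Fin 8).val hv.1 hall1
      by_cases hall2 : ∀ t : ℕ, 0 < t → t < (i - j : Fin 8).val →
          z + dir (j + (t : Fin 8)) ∈ infComp A
      · have hconn' := ring_walk A z j (i - j : Fin 8).val hw.1 hall2
          (by rw [e2]; exact hv.1)
        rw [e2] at hconn'
        exact conn_symm (fun _ _ h => adj_symm h) hconn'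
      · obtain ⟨m2, hm2, hm2n, ha2⟩ := first_block A z j (i - j : Fin 8).val hw.1 hall2
        exfalso
        -- build a nearest-neighbour path from v to w inside the infinite component
        have hpath : ConnIn Adj (infComp A) (z + dir i) (z + dir j) :=
          infComp_conn hfin hv.1 hw.1
        obtain ⟨l0, hch, hlast⟩ := List.exists_isChain_cons_of_relationReflTransGen hpath.2
        set l : List V2 := (z + dir i) :: l0 with hldef
        have hl : l ≠ [] := by simp [hldef]
        have hlmem : ∀ x ∈ l, x ∈ infComp A := by
          intro x hx
          rcases List.mem_cons.1 hx with rfl | hx0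
          · exact hv.1
          · exact chain_mem hch x hx0
        have hzl : z ∉ l := fun hm => (hlmem z hm).1 hz
        -- the closed walk L = z :: l ++ [z]
        have hchainAdj : List.Chain Adj (z + dir i) l0 :=
          List.Chain.imp (fun a b h => h.1) hch
        have hlastl : l.getLast hl = z + dir j := hlast
        have c0 : List.Chain Adj (z + dir i) (l0 ++ [z]) := by
          refine chain_append_singleton hchainAdj ?_
          have : (((z + dir i) :: l0).getLast (by simp)) = z + dir j := hlast
          rw [this]
          exact hw.2
        have hc : (z :: (l ++ [z])).Chain' Adj := by
          show List.Chain Adj z (l ++ [z])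
          exact List.Chain.cons (adj_symm hv.2) c0
        have hneL : (z :: (l ++ [z])) ≠ [] := by simp
        have hcl : (z :: (l ++ [z])).getLast hneL = (z :: (l ++ [z])).head hneL := by
          show ((z :: l) ++ [z]).getLast (by simp) = z
          exact List.getLast_append _
        have hS : ∀ s ∈ A \ {z}, s ∉ (z :: (l ++ [z])) := by
          intro s hs hm
          rcases List.mem_cons.1 hm with rfl | hm'
          · exact hs.2 rfl
          · rcases List.mem_append.1 hm' with hm2' | hm3
            · exact (hlmem s hm2').1 hs.1
            · exact hs.2 (by simpa using hm3)
        -- the two blocking vertices of A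
        have hm18 : m1 < 8 := by omega
        have hm28 : m2 < 8 := by omega
        have ha1m : z + dir (i + (m1 : Fin 8)) ∈ A \ {z} :=
          ⟨ha1, by intro hm; exact ring_ne_z z _ (by simpa using hm)⟩
        have ha2m : z + dir (j + (m2 : Fin 8)) ∈ A \ {z} :=
          ⟨ha2, by intro hm; exact ring_ne_z z _ (by simpa using hm)⟩
        have hP := hstar _ ha1m _ ha2m
        -- the winding count is constant along the *-path
        have hfe : fwind (z :: (l ++ [z])) (z + dir (i + (m1 : Fin 8)))
            = fwind (z :: (l ++ [z])) (z + dir (j + (m2 : Fin 8))) :=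
          fwind_const_on_path hc hneL hcl hS hP
        have d1 := hvec_dispatch hc (i + (m1 : Fin 8)) (hS _ ha1m)
        have d2 := hvec_dispatch hc (j + (m2 : Fin 8)) (hS _ ha2m)
        have key : hval (eT (z :: (l ++ [z])) z (z + E1)) (eT (z :: (l ++ [z])) z (z + E2))
            (eT (z :: (l ++ [z])) z (z - E1)) (i + (m1 : Fin 8))
            = hval (eT (z :: (l ++ [z])) z (z + E1)) (eT (z :: (l ++ [z])) z (z + E2))
            (eT (z :: (l ++ [z])) z (z - E1)) (j + (m2 : Fin 8)) := by
          linarith [d1, d2, hfe]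
        -- evaluate the edge-traversal counts
        have hhead : l.head hl = z + dir i := rfl
        have cond : ∀ k : Fin 8, (z + dir i = z + dir k) = (i = k) ∧
            (z + dir j = z + dir k) = (j = k) := by
          intro k
          constructor <;> (apply propext; constructor)
          · intro h; exact dir_inj (add_left_cancel h)
          · intro h; rw [h]
          · intro h; exact dir_inj (add_left_cancel h)
          · intro h; rw [h]
        have htE : eT (z :: (l ++ [z])) z (z + E1)
            = (if i = 0 then (1:ℤ) else 0) - (if j = 0 then 1 else 0) := by
          rw [← dir_zero, eT_closed_z l hl hzl (ring_ne_z z 0), hhead, hlastl]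
          simp only [(cond 0).1, (cond 0).2]
        have htN : eT (z :: (l ++ [z])) z (z + E2)
            = (if i = 2 then (1:ℤ) else 0) - (if j = 2 then 1 else 0) := by
          rw [← dir_two, eT_closed_z l hl hzl (ring_ne_z z 2), hhead, hlastl]
          simp only [(cond 2).1, (cond 2).2]
        have htW : eT (z :: (l ++ [z])) z (z - E1)
            = (if i = 4 then (1:ℤ) else 0) - (if j = 4 then 1 else 0) := by
          rw [← dir_four, eT_closed_z l hl hzl (ring_ne_z z 4), hhead, hlastl]
          simp only [(cond 4).1, (cond 4).2]
        rw [htE, htN, htW] at key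
        -- contradiction with the finite check
        have hμ1 : ((m1 : Fin 8)).val = m1 := by
          rw [Fin.val_natCast]; omega
        have hμ2 : ((m2 : Fin 8)).val = m2 := by
          rw [Fin.val_natCast]; omega
        exact final_num i j (m1 : Fin 8) (m2 : Fin 8) hi4 hj4 hij
          (by omega) (by omega) (by omega) (by omega) key
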